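/- arXiv:2103.07128 — 5 statements merged into one kernel-verified Lean document; each statement's English description precedes it below -/
import Mathlib

section
/- Let g be a natural number and let R and L be g×g matrices over ℚ. Form the 2g×2g block matrix A = [[0, P],[Q, L]] with P = R − (1/2)·I_g and Q = Rᵀ + (1/2)·I_g. Then, in the field of rational functions ℚ(X), det(X·A − Aᵀ) = X^g · ρ_R(X) · ρ_R(X⁻¹), where ρ_R(x) := det((x−1)·R − (1/2)(x+1)·I_g). In particular, the Alexander polynomial Δ(X) := X^{−g}·det(X·A − Aᵀ) determined by the Seifert matrix A factors as Δ(X) = ρ_R(X)·ρ_R(X⁻¹), and it depends only on R and not on L. -/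
set_option synthInstance.maxHeartbeats 1000000
set_option maxHeartbeats 1000000


open Matrix Polynomial

/-- The half Alexander polynomial `ρ_R(X) = det((X-1)·R - (1/2)(X+1)·I)` of a square
rational matrix `R`. -/
noncomputable def halfAlex {g : ℕ} (R : Matrix (Fin g) (Fin g) ℚ) : Polynomial ℚ :=
  ((X - 1 : ℚ[X]) • R.map C - (C (1/2 : ℚ) * (X + 1)) • (1 : Matrix (Fin g) (Fin g) ℚ[X])).det

/-- `ρ_R(X⁻¹)` as an element of the field of rational functions `ℚ(X)`. -/
noncomputable def halfAlexInv {g : ℕ} (R : Matrix (Fin g) (Fin g) ℚ) : RatFunc ℚ :=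
  (halfAlex R).eval₂ (algebraMap ℚ (RatFunc ℚ)) (RatFunc.X)⁻¹

/-- The Seifert matrix `A = [[0, R - (1/2)I], [Rᵀ + (1/2)I, L]]` built from `R` and `L`. -/
noncomputable def seifert {g : ℕ} (R L : Matrix (Fin g) (Fin g) ℚ) :
    Matrix (Fin g ⊕ Fin g) (Fin g ⊕ Fin g) ℚ :=
  Matrix.fromBlocks 0 (R - (1/2 : ℚ) • 1) (Rᵀ + (1/2 : ℚ) • 1) L

/-- The polynomial `det(X·A - Aᵀ)` for the Seifert matrix `A` built from `R` and `L`. -/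
noncomputable def seifertDet {g : ℕ} (R L : Matrix (Fin g) (Fin g) ℚ) : Polynomial ℚ :=
  ((X : ℚ[X]) • (seifert R L).map C - ((seifert R L).map C)ᵀ).det

/-- determinant of a block matrix with zero top-left block and invertible top-right block -/
lemma det_fromBlocks_zero11 {n : ℕ} {K : Type*} [Field K]
    (B C D : Matrix (Fin n) (Fin n) K) (hB : IsUnit B.det) :
    (Matrix.fromBlocks 0 B C D).det = (-1 : K) ^ n * B.det * C.det := by
  have h1 : (Matrix.fromBlocks 1 0 ((1 - D) * B⁻¹) 1 :
      Matrix (Fin n ⊕ Fin n) (Fin n ⊕ Fin n) K) * Matrix.fromBlocks 0 B C D =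
      Matrix.fromBlocks 0 B C 1 := by
    rw [Matrix.fromBlocks_multiply]
    simp [Matrix.mul_assoc, Matrix.nonsing_inv_mul B hB, Matrix.sub_mul]
  have hdetL : (Matrix.fromBlocks 1 0 ((1 - D) * B⁻¹) 1 :
      Matrix (Fin n ⊕ Fin n) (Fin n ⊕ Fin n) K).det = 1 := by
    rw [Matrix.det_fromBlocks_zero₁₂]; simp
  have h2 : (Matrix.fromBlocks 0 B C D).det = (Matrix.fromBlocks 0 B C 1 :
      Matrix (Fin n ⊕ Fin n) (Fin n ⊕ Fin n) K).det := by
    rw [← h1, Matrix.det_mul, hdetL, one_mul]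
  haveI : Invertible (1 : Matrix (Fin n) (Fin n) K) := invertibleOne
  rw [h2, Matrix.det_fromBlocks₂₂]
  simp [Matrix.det_neg, Matrix.det_mul, zero_sub]
  ring

noncomputable def rmat {g : ℕ} (R : Matrix (Fin g) (Fin g) ℚ) :
    Matrix (Fin g) (Fin g) (RatFunc ℚ) := R.map (algebraMap ℚ (RatFunc ℚ))

noncomputable def BBm {g : ℕ} (R : Matrix (Fin g) (Fin g) ℚ) :
    Matrix (Fin g) (Fin g) (RatFunc ℚ) :=
  (RatFunc.X - 1 : RatFunc ℚ) • rmat R - ((1/2 : RatFunc ℚ) * (RatFunc.X + 1)) • 1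

noncomputable def CCm {g : ℕ} (R : Matrix (Fin g) (Fin g) ℚ) :
    Matrix (Fin g) (Fin g) (RatFunc ℚ) :=
  (RatFunc.X - 1 : RatFunc ℚ) • (rmat R)ᵀ + ((1/2 : RatFunc ℚ) * (RatFunc.X + 1)) • 1

noncomputable def MMm {g : ℕ} (R : Matrix (Fin g) (Fin g) ℚ) :
    Matrix (Fin g) (Fin g) (RatFunc ℚ) :=
  ((RatFunc.X)⁻¹ - 1 : RatFunc ℚ) • rmat R - ((1/2 : RatFunc ℚ) * ((RatFunc.X)⁻¹ + 1)) • 1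

lemma halfAlex_map {g : ℕ} (R : Matrix (Fin g) (Fin g) ℚ) :
    algebraMap ℚ[X] (RatFunc ℚ) (halfAlex R) = (BBm R).det := by
  rw [halfAlex, RingHom.map_det]
  congr 1
  ext i j
  simp only [RingHom.mapMatrix_apply]
  by_cases h : i = j <;>
    simp [BBm, rmat, Matrix.map_apply, Matrix.one_apply, h, map_sub, _root_.map_mul, map_add,
      map_div₀, RatFunc.algebraMap_C, smul_eq_mul,
      ← IsScalarTower.algebraMap_apply ℚ ℚ[X] (RatFunc ℚ)]

lemma halfAlexInv_det {g : ℕ} (R : Matrix (Fin g) (Fin g) ℚ) :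
    halfAlexInv R = (MMm R).det := by
  rw [halfAlexInv, halfAlex, ← Polynomial.coe_eval₂RingHom, RingHom.map_det]
  congr 1
  ext i j
  simp only [RingHom.mapMatrix_apply]
  by_cases h : i = j <;>
    simp [MMm, rmat, Matrix.map_apply, Matrix.one_apply, h, coe_eval₂RingHom, eval₂_sub,
      eval₂_mul, eval₂_add, eval₂_X, eval₂_C, eval₂_one, map_div₀, smul_eq_mul]

lemma seifertDet_map {g : ℕ} (R L : Matrix (Fin g) (Fin g) ℚ) :
    algebraMap ℚ[X] (RatFunc ℚ) (seifertDet R L) =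
      (Matrix.fromBlocks 0 (BBm R) (CCm R)
        ((RatFunc.X : RatFunc ℚ) • rmat L - (rmat L)ᵀ)).det := by
  rw [seifertDet, RingHom.map_det]
  congr 1
  ext i j
  simp only [RingHom.mapMatrix_apply]
  rcases i with i | i <;> rcases j with j | j <;> by_cases h : i = j <;>
    simp [seifert, BBm, CCm, rmat, Matrix.map_apply, Matrix.one_apply, h, map_sub,
      _root_.map_mul, map_add, map_div₀, RatFunc.algebraMap_C, smul_eq_mul,
      Matrix.fromBlocks_apply₁₁, Matrix.fromBlocks_apply₁₂, Matrix.fromBlocks_apply₂₁,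
      Matrix.fromBlocks_apply₂₂, Matrix.transpose_apply, Matrix.fromBlocks_transpose, eq_comm,
      ← IsScalarTower.algebraMap_apply ℚ ℚ[X] (RatFunc ℚ)] <;>
    ring

lemma halfAlex_ne_zero {g : ℕ} (R : Matrix (Fin g) (Fin g) ℚ) : halfAlex R ≠ 0 := by
  have he : Polynomial.eval 1 (halfAlex R) = (-1 : ℚ) ^ g := by
    rw [halfAlex, ← Polynomial.coe_evalRingHom, RingHom.map_det]
    have hm : (evalRingHom (1 : ℚ)).mapMatrix
        ((X - 1 : ℚ[X]) • R.map C - (C (1/2 : ℚ) * (X + 1)) • (1 : Matrix (Fin g) (Fin g) ℚ[X]))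
        = -(1 : Matrix (Fin g) (Fin g) ℚ) := by
      ext i j
      by_cases h : i = j <;>
        simp [Matrix.map_apply, Matrix.one_apply, h, smul_eq_mul]
      norm_num
    rw [hm]
    simp [Matrix.det_neg]
  intro h
  rw [h] at he
  simp at he
  exact absurd he.symm (pow_ne_zero g (by norm_num))

lemma key_inv {g : ℕ} (R : Matrix (Fin g) (Fin g) ℚ) :
    (RatFunc.X : RatFunc ℚ) ^ g * halfAlexInv R = (-1 : RatFunc ℚ) ^ g * (CCm R).det := by
  have hx : (RatFunc.X : RatFunc ℚ) ≠ 0 := RatFunc.X_ne_zero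
  have h4 : (RatFunc.X : RatFunc ℚ) • MMm R = -(CCm R)ᵀ := by
    ext i j
    by_cases h : i = j
    · simp [MMm, CCm, rmat, Matrix.map_apply, Matrix.one_apply, h, smul_eq_mul, eq_comm,
        Matrix.transpose_apply]
      linear_combination (((R j j : ℚ) : RatFunc ℚ) - 2⁻¹) * mul_inv_cancel₀ hx
    · simp [MMm, CCm, rmat, Matrix.map_apply, Matrix.one_apply, h, smul_eq_mul, eq_comm,
        Matrix.transpose_apply]
      linear_combination ((R i j : ℚ) : RatFunc ℚ) * mul_inv_cancel₀ hx
  have h5 : ((RatFunc.X : RatFunc ℚ) • MMm R).det = (RatFunc.X : RatFunc ℚ) ^ g * (MMm R).det := by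
    rw [Matrix.det_smul]
    simp
  rw [halfAlexInv_det, ← h5, h4]
  rw [Matrix.det_neg]
  simp [Matrix.det_transpose]

/-- for the `2g × 2g` block Seifert matrix
`A = [[0, R - (1/2)I], [Rᵀ + (1/2)I, L]]`, in `ℚ(X)` one has
`det(X·A - Aᵀ) = X^g · ρ_R(X) · ρ_R(X⁻¹)`, and consequently
`Δ(X) = X^(-g) · det(X·A - Aᵀ) = ρ_R(X) · ρ_R(X⁻¹)` is independent of `L`. -/
theorem det_seifert_eq_halfAlex_mul (g : ℕ) (R L : Matrix (Fin g) (Fin g) ℚ) :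
    algebraMap ℚ[X] (RatFunc ℚ) (seifertDet R L) =
      RatFunc.X ^ g * algebraMap ℚ[X] (RatFunc ℚ) (halfAlex R) * halfAlexInv R ∧
    RatFunc.X ^ (-(g : ℤ)) * algebraMap ℚ[X] (RatFunc ℚ) (seifertDet R L) =
      algebraMap ℚ[X] (RatFunc ℚ) (halfAlex R) * halfAlexInv R := by
  have hx : (RatFunc.X : RatFunc ℚ) ≠ 0 := RatFunc.X_ne_zero
  have hBdet : (BBm R).det ≠ 0 := by
    rw [← halfAlex_map]
    exact fun h => halfAlex_ne_zero R
      ((map_eq_zero_iff _ (IsFractionRing.injective ℚ[X] (RatFunc ℚ))).mp h)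
  have h1 : algebraMap ℚ[X] (RatFunc ℚ) (seifertDet R L) =
      RatFunc.X ^ g * algebraMap ℚ[X] (RatFunc ℚ) (halfAlex R) * halfAlexInv R := by
    rw [seifertDet_map, det_fromBlocks_zero11 _ _ _ (isUnit_iff_ne_zero.mpr hBdet),
      halfAlex_map]
    linear_combination (-(BBm R).det) * key_inv R
  refine ⟨h1, ?_⟩
  rw [h1, _root_.zpow_neg, zpow_natCast]
  have hxg : (RatFunc.X : RatFunc ℚ) ^ g ≠ 0 := pow_ne_zero _ hx
  field_simp
end

section
/- Let R be a g×g ribbon matrix, i.e. a matrix over ℚ whose diagonal entries each equal 1/2 or −1/2 and whose off-diagonal entries each lie in {−1, 0, 1}. Then the half Alexander polynomial ρ_R(X) = det((X−1)·R − (1/2)(X+1)·I_g) has integer coefficients, i.e. ρ_R lies in the image of ℤ[X] in ℚ[X]. -/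
open Matrix Polynomial

/-- A ribbon matrix: diagonal entries are `±1/2`, off-diagonal entries lie in `{-1, 0, 1}`. -/
def IsRibbonMatrix {g : ℕ} (R : Matrix (Fin g) (Fin g) ℚ) : Prop :=
  (∀ i, R i i = 1/2 ∨ R i i = -(1/2)) ∧
    ∀ i j, i ≠ j → R i j = -1 ∨ R i j = 0 ∨ R i j = 1

/-!
Each diagonal entry `(X - 1)·(±1/2) - (X + 1)/2` of the matrix defining `ρ_R` equals `-1` or `-X`,
and each off-diagonal entry is an integer multiple of `X - 1`. So the matrix is the image of a
matrix over `ℤ[X]`, and its determinant is the image of that matrix's determinant.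
-/

theorem Matrix.det_mem_range_of_forall_mem_range {n R S : Type*} [Fintype n] [DecidableEq n]
    [CommRing R] [CommRing S] (f : R →+* S) {M : Matrix n n S} (hM : ∀ i j, M i j ∈ f.range) :
    M.det ∈ f.range := by
  choose N hN using hM
  refine ⟨(of N).det, ?_⟩
  rw [f.map_det]
  congr
  ext i j
  exact hN i j

lemma sub_one_mul_C_intCast_mem_range (n : ℤ) :
    (X - 1) * C (n : ℚ) ∈ (mapRingHom (Int.castRingHom ℚ)).range :=
  ⟨(X - 1) * C n, by simp⟩

lemma sub_one_mul_C_half_sub_mem_range {r : ℚ} (hr : r = 1/2 ∨ r = -(1/2)) :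
    (X - 1) * C r - C (1/2) * (X + 1) ∈ (mapRingHom (Int.castRingHom ℚ)).range := by
  have h2 : C (1/2 : ℚ) * 2 = 1 := by rw [← C_ofNat, ← C_mul]; norm_num
  rcases hr with rfl | rfl
  · exact ⟨-1, by simp only [map_neg, map_one]; linear_combination h2⟩
  · exact ⟨-X, by simp only [map_neg, coe_mapRingHom, map_X]; linear_combination X * h2⟩

lemma IsRibbonMatrix.exists_intCast {g : ℕ} {R : Matrix (Fin g) (Fin g) ℚ} (hR : IsRibbonMatrix R)
    {i j : Fin g} (hij : i ≠ j) : ∃ n : ℤ, R i j = n := by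
  rcases hR.2 i j hij with h | h | h <;> rw [h]
  exacts [⟨-1, by simp⟩, ⟨0, by simp⟩, ⟨1, by simp⟩]

/-- the half Alexander polynomial of a ribbon matrix has integer
coefficients, i.e. it lies in the image of `ℤ[X]` in `ℚ[X]`. -/
theorem halfAlex_mem_image_int {g : ℕ} (R : Matrix (Fin g) (Fin g) ℚ)
    (hR : IsRibbonMatrix R) :
    ∃ p : Polynomial ℤ, p.map (Int.castRingHom ℚ) = halfAlex R := by
  unfold halfAlex
  refine det_mem_range_of_forall_mem_range (mapRingHom (Int.castRingHom ℚ)) fun i j => ?_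
  simp only [Matrix.sub_apply, Matrix.smul_apply, map_apply, one_apply, smul_eq_mul]
  split_ifs with hij
  · subst hij
    rw [mul_one]
    exact sub_one_mul_C_half_sub_mem_range (hR.1 i)
  · obtain ⟨n, hn⟩ := hR.exists_intCast hij
    rw [mul_zero, sub_zero, hn]
    exact sub_one_mul_C_intCast_mem_range n
end

section
/- Let R be a g×g ribbon matrix, i.e. a matrix over ℚ whose diagonal entries each equal 1/2 or −1/2 and whose off-diagonal entries each lie in {−1, 0, 1}. Then ρ_R(−1) = (−1)^g·det(2R), the quantity det(2R) is an odd integer, and Δ_R(−1) = (det(2R))². In particular, the value of the Conway-normalized Alexander polynomial at −1 (the determinant of the ribbon knot) is the square of an odd integer. -/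
open Matrix Polynomial

/-- The Conway-normalized Alexander polynomial `Δ_R(X) = ρ_R(X) · ρ_R(X⁻¹)` determined by a
square rational matrix `R`, as an element of the field of rational functions `ℚ(X)`. -/
noncomputable def conwayAlex {g : ℕ} (R : Matrix (Fin g) (Fin g) ℚ) : RatFunc ℚ :=
  algebraMap ℚ[X] (RatFunc ℚ) (halfAlex R) *
    (halfAlex R).eval₂ (algebraMap ℚ (RatFunc ℚ)) (RatFunc.X)⁻¹

/-- Evaluation of a half Alexander polynomial at `-1`. -/
lemma halfAlex_eval_neg_one_aux {g : ℕ} (R : Matrix (Fin g) (Fin g) ℚ) :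
    (halfAlex R).eval (-1) = (-1 : ℚ) ^ g * ((2 : ℚ) • R).det := by
  set M : Matrix (Fin g) (Fin g) ℚ[X] :=
    (X - 1 : ℚ[X]) • R.map C - (C (1/2 : ℚ) * (X + 1)) • (1 : Matrix (Fin g) (Fin g) ℚ[X])
    with hMdef
  have h : (evalRingHom (-1 : ℚ)) M.det = (M.map (evalRingHom (-1 : ℚ))).det :=
    RingHom.map_det _ _
  have hmap : M.map (evalRingHom (-1 : ℚ)) = (-2 : ℚ) • R := by
    ext i j
    by_cases hij : i = j <;>
      simp [hMdef, Matrix.map_apply, Matrix.sub_apply, Matrix.smul_apply, Matrix.one_apply,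
        hij, smul_eq_mul] <;> ring
  have h1 : (halfAlex R).eval (-1) = ((-2 : ℚ) • R).det := by
    have h2 : (halfAlex R).eval (-1) = (evalRingHom (-1 : ℚ)) M.det := rfl
    rw [h2, h, hmap]
  rw [h1, Matrix.det_smul, Matrix.det_smul, Fintype.card_fin, neg_pow]
  ring

-- evaluation of a quotient of polynomials inside RatFunc at -1
lemma eval_quot {a b : ℚ[X]} (hb : b ≠ 0) (hbe : b.eval (-1) ≠ 0) :
    RatFunc.eval (RingHom.id ℚ) (-1)
      (algebraMap ℚ[X] (RatFunc ℚ) a / algebraMap ℚ[X] (RatFunc ℚ) b)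
      = a.eval (-1) / b.eval (-1) := by
  set x : RatFunc ℚ := algebraMap ℚ[X] (RatFunc ℚ) a / algebraMap ℚ[X] (RatFunc ℚ) b with hx
  have hdvd : RatFunc.denom x ∣ b := (RatFunc.denom_dvd hb).mpr ⟨a, rfl⟩
  have hden : Polynomial.eval₂ (RingHom.id ℚ) (-1) (RatFunc.denom x) ≠ 0 := by
    obtain ⟨c, hc⟩ := hdvd
    intro h0
    have h0' : (RatFunc.denom x).eval (-1) = 0 := h0
    exact hbe (by rw [hc, Polynomial.eval_mul, h0', zero_mul])
  have hxb : x * algebraMap ℚ[X] (RatFunc ℚ) b = algebraMap ℚ[X] (RatFunc ℚ) a := by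
    rw [hx, div_mul_cancel₀]
    exact RatFunc.algebraMap_ne_zero hb
  have hb1 : Polynomial.eval₂ (RingHom.id ℚ) (-1)
      (RatFunc.denom (algebraMap ℚ[X] (RatFunc ℚ) b)) ≠ 0 := by
    rw [RatFunc.denom_algebraMap]
    simp
  have key := RatFunc.eval_mul (f := RingHom.id ℚ) (a := (-1 : ℚ)) hden hb1
  rw [hxb] at key
  simp only [RatFunc.eval_algebraMap, Algebra.algebraMap_self, map_id, RingHom.id_apply] at key
  have ha' : Polynomial.eval₂ (RingHom.id ℚ) (-1) a = a.eval (-1) := rfl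
  have hb' : Polynomial.eval₂ (RingHom.id ℚ) (-1) b = b.eval (-1) := rfl
  rw [ha', hb'] at key
  rw [eq_div_iff hbe]
  exact key.symm

lemma eval₂_X_ratfunc (q : ℚ[X]) :
    Polynomial.eval₂ (algebraMap ℚ (RatFunc ℚ)) RatFunc.X q = algebraMap ℚ[X] (RatFunc ℚ) q := by
  rw [← Polynomial.aeval_def, ← RatFunc.algebraMap_X, Polynomial.aeval_algebraMap_apply,
    Polynomial.aeval_X_left_apply]

/-- for a ribbon matrix `R`, `ρ_R(-1) = (-1)^g · det(2R)`, the determinant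
`det(2R)` is an odd integer, and `Δ_R(-1) = (det(2R))²`, so the value of the
Conway-normalized Alexander polynomial at `-1` is the square of an odd integer. -/
theorem halfAlex_eval_neg_one {g : ℕ} (R : Matrix (Fin g) (Fin g) ℚ)
    (hR : IsRibbonMatrix R) :
    (halfAlex R).eval (-1) = (-1 : ℚ) ^ g * ((2 : ℚ) • R).det ∧
    (∃ m : ℤ, Odd m ∧ ((2 : ℚ) • R).det = (m : ℚ)) ∧
    RatFunc.eval (RingHom.id ℚ) (-1) (conwayAlex R) = ((2 : ℚ) • R).det ^ 2 := by
  obtain ⟨hdiag, hoff⟩ := hR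
  refine ⟨halfAlex_eval_neg_one_aux R, ?_, ?_⟩
  · -- integrality and oddness
    set M : Matrix (Fin g) (Fin g) ℤ := Matrix.of fun i j =>
      if i = j then (if R i i = 1/2 then 1 else -1)
      else (if R i j = -1 then -2 else if R i j = 1 then 2 else 0) with hM
    have hcast : M.map (fun z : ℤ => (z : ℚ)) = (2 : ℚ) • R := by
      ext i j
      by_cases h : i = j
      · subst h
        rcases hdiag i with h1 | h1
        · have hMi : M i i = 1 := by rw [hM, Matrix.of_apply, if_pos rfl, if_pos h1]
          rw [Matrix.map_apply, hMi, Matrix.smul_apply, h1, smul_eq_mul]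
          norm_num
        · have h2 : ¬ R i i = 1/2 := by rw [h1]; norm_num
          have hMi : M i i = -1 := by rw [hM, Matrix.of_apply, if_pos rfl, if_neg h2]
          rw [Matrix.map_apply, hMi, Matrix.smul_apply, h1, smul_eq_mul]
          norm_num
      · have hMi2 : M i j = if R i j = -1 then -2 else if R i j = 1 then 2 else 0 := by
          rw [hM, Matrix.of_apply, if_neg h]
        rcases hoff i j h with h1 | h1 | h1 <;>
          rw [Matrix.map_apply, hMi2, Matrix.smul_apply, h1, smul_eq_mul] <;> norm_num
    have hdet : ((2 : ℚ) • R).det = (M.det : ℚ) := by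
      have h := RingHom.map_det (Int.castRingHom ℚ) M
      rw [RingHom.mapMatrix_apply] at h
      have h2 : M.map ⇑(Int.castRingHom ℚ) = (2 : ℚ) • R := hcast
      rw [h2] at h
      exact h.symm
    refine ⟨M.det, ?_, hdet⟩
    have hmod : M.map (fun z : ℤ => (z : ZMod 2)) = (1 : Matrix (Fin g) (Fin g) (ZMod 2)) := by
      ext i j
      by_cases h : i = j
      · subst h
        by_cases h1 : R i i = 1/2
        · have hMi : M i i = 1 := by rw [hM, Matrix.of_apply, if_pos rfl, if_pos h1]
          rw [Matrix.map_apply, hMi, Matrix.one_apply_eq]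
          decide
        · have hMi : M i i = -1 := by rw [hM, Matrix.of_apply, if_pos rfl, if_neg h1]
          rw [Matrix.map_apply, hMi, Matrix.one_apply_eq]
          decide
      · have hMi2 : M i j = if R i j = -1 then -2 else if R i j = 1 then 2 else 0 := by
          rw [hM, Matrix.of_apply, if_neg h]
        rw [Matrix.map_apply, hMi2, Matrix.one_apply_ne h]
        by_cases h1 : R i j = -1 <;> by_cases h2 : R i j = 1 <;> simp [h1, h2] <;> decide
    have hdet2 : ((M.det : ZMod 2)) = 1 := by
      have h := RingHom.map_det (Int.castRingHom (ZMod 2)) M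
      rw [RingHom.mapMatrix_apply] at h
      have h3 : M.map ⇑(Int.castRingHom (ZMod 2)) = (1 : Matrix (Fin g) (Fin g) (ZMod 2)) := hmod
      rw [h3, Matrix.det_one] at h
      exact h
    rw [← Int.not_even_iff_odd]
    intro he
    have h2 : ((2 : ℕ) : ℤ) ∣ M.det := by exact_mod_cast he.two_dvd
    have h0 : ((M.det : ZMod 2)) = 0 := (ZMod.intCast_zmod_eq_zero_iff_dvd M.det 2).mpr h2
    rw [hdet2] at h0
    exact one_ne_zero h0
  · -- the Conway Alexander value
    set p : ℚ[X] := halfAlex R with hp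
    set n : ℕ := p.natDegree with hn
    have hXne : (RatFunc.X : RatFunc ℚ) ≠ 0 := RatFunc.X_ne_zero
    have hXinv : ((RatFunc.X : RatFunc ℚ))⁻¹ ≠ 0 := inv_ne_zero hXne
    haveI : Invertible ((RatFunc.X : RatFunc ℚ))⁻¹ := invertibleOfNonzero hXinv
    have hrev := Polynomial.eval₂_reverse_mul_pow (algebraMap ℚ (RatFunc ℚ))
      ((RatFunc.X : RatFunc ℚ))⁻¹ p
    rw [invOf_eq_inv, inv_inv, eval₂_X_ratfunc] at hrev
    have hfac : p.eval₂ (algebraMap ℚ (RatFunc ℚ)) (RatFunc.X)⁻¹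
        = algebraMap ℚ[X] (RatFunc ℚ) p.reverse / algebraMap ℚ[X] (RatFunc ℚ) (X ^ n) := by
      rw [← hrev, inv_pow, div_eq_mul_inv]
      congr 1
      rw [map_pow, RatFunc.algebraMap_X]
    have hconway : conwayAlex R
        = algebraMap ℚ[X] (RatFunc ℚ) (p * p.reverse) / algebraMap ℚ[X] (RatFunc ℚ) (X ^ n) := by
      rw [conwayAlex, ← hp, hfac, _root_.map_mul, mul_div_assoc]
    have hXn : (X ^ n : ℚ[X]) ≠ 0 := pow_ne_zero _ X_ne_zero
    have hXneval : (X ^ n : ℚ[X]).eval (-1) = (-1 : ℚ) ^ n := by simp [eval_pow]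
    have hXne2 : (X ^ n : ℚ[X]).eval (-1) ≠ 0 := by
      rw [hXneval]
      exact pow_ne_zero _ (by norm_num)
    rw [hconway, eval_quot hXn hXne2, hXneval, Polynomial.eval_mul]
    -- reverse evaluation at -1
    haveI : Invertible (-1 : ℚ) := invertibleOfNonzero (by norm_num)
    have hrev2 := Polynomial.eval₂_reverse_mul_pow (RingHom.id ℚ) (-1 : ℚ) p
    rw [invOf_eq_inv] at hrev2
    have hinv : ((-1 : ℚ))⁻¹ = -1 := by norm_num
    rw [hinv] at hrev2
    have hrev2' : p.reverse.eval (-1) * (-1 : ℚ) ^ n = p.eval (-1) := hrev2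
    have hpe : p.eval (-1) = (-1 : ℚ) ^ g * ((2 : ℚ) • R).det := halfAlex_eval_neg_one_aux R
    have h1n : ((-1 : ℚ) ^ n) ≠ 0 := pow_ne_zero _ (by norm_num)
    rw [div_eq_iff h1n]
    have hone : ((-1 : ℚ) ^ n) * ((-1 : ℚ) ^ n) = 1 := by
      rw [← pow_add, ← two_mul, pow_mul]
      norm_num
    have honeg : ((-1 : ℚ) ^ g) * ((-1 : ℚ) ^ g) = 1 := by
      rw [← pow_add, ← two_mul, pow_mul]
      norm_num
    have key : p.eval (-1) * p.reverse.eval (-1) * (-1 : ℚ) ^ n = ((2 : ℚ) • R).det ^ 2 := by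
      calc p.eval (-1) * p.reverse.eval (-1) * (-1 : ℚ) ^ n
          = p.eval (-1) * (p.reverse.eval (-1) * (-1 : ℚ) ^ n) := by ring
        _ = p.eval (-1) * p.eval (-1) := by rw [hrev2']
        _ = ((-1 : ℚ) ^ g * (-1 : ℚ) ^ g) * (((2 : ℚ) • R).det * ((2 : ℚ) • R).det) := by
              rw [hpe]; ring
        _ = ((2 : ℚ) • R).det ^ 2 := by rw [honeg, one_mul, ← pow_two]
    calc p.eval (-1) * p.reverse.eval (-1)
        = p.eval (-1) * p.reverse.eval (-1) * ((-1 : ℚ) ^ n * (-1 : ℚ) ^ n) := by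
          rw [hone, mul_one]
      _ = (p.eval (-1) * p.reverse.eval (-1) * (-1 : ℚ) ^ n) * (-1 : ℚ) ^ n := by ring
      _ = ((2 : ℚ) • R).det ^ 2 * (-1 : ℚ) ^ n := by rw [key]
end

section
/- Let (T, S) be a ribbon graph of size g with ribbon matrix R and half Alexander polynomial ρ(X). Suppose v is a pendant vertex (degree 1) of T that is not in the image of S, with unique incident edge e_i. Let (T', S') be the ribbon graph of size g−1 obtained by the R0-reduction: delete v and e_i from T, and let S' be the restriction of S to the remaining edges. Then the half Alexander polynomial ρ'(X) of (T', S') satisfies ρ'(X) = ε·X^k·ρ(X) in ℚ(X) for some ε ∈ {1, −1} and some k ∈ {−1, 0, 1}; consequently the Conway-normalized Alexander polynomials agree: ρ'(X)·ρ'(X⁻¹) = ρ(X)·ρ(X⁻¹). -/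
open Matrix Polynomial

/-- A ribbon graph: a directed tree `T` (vertex type `V`, edge type `E`, each edge `e`
having a `tail` and a `head`, the underlying undirected graph being a tree, so that
`card V = card E + 1`) together with a singularity map `S` from edges to vertices. -/
structure RibbonGraph (V E : Type) [Fintype V] [DecidableEq V] [Fintype E] [DecidableEq E] where
  /-- the tail of each directed edge -/
  tail : E → V
  /-- the head of each directed edge -/
  head : E → V
  /-- the singularity map -/
  S : E → V
  no_loop : ∀ e, tail e ≠ head e
  edge_inj : Function.Injective fun e => s(tail e, head e)
  connected : (SimpleGraph.fromRel fun a b => ∃ e, tail e = a ∧ head e = b).Connected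
  card_eq : Fintype.card V = Fintype.card E + 1

variable {V E : Type} [Fintype V] [DecidableEq V] [Fintype E] [DecidableEq E]

/-- The underlying undirected graph of the tree with the edge `j` removed. -/
def RibbonGraph.without (G : RibbonGraph V E) (j : E) : SimpleGraph V :=
  SimpleGraph.fromRel fun a b => ∃ e, e ≠ j ∧ G.tail e = a ∧ G.head e = b

open Classical in
/-- The ribbon matrix of a ribbon graph `(T, S)`: subdividing edge `eᵢ` by a midpoint
`v_{eᵢ}` and letting `Pᵢ` be the unique path from `v_{eᵢ}` to `S(eᵢ)` in the subdivided
tree, we set `Rᵢᵢ = ±1/2` according to whether the first step of `Pᵢ` is towards the head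
or the tail of `eᵢ` (equivalently, whether `S(eᵢ)` lies in the head or tail component of
`T - eᵢ`), and for `j ≠ i`, `Rⱼᵢ = 1` (resp. `-1`, `0`) if `Pᵢ` traverses `eⱼ` from tail
to head (resp. from head to tail, not at all); equivalently, `Rⱼᵢ = 1` iff in `T - eⱼ`
the edge `eᵢ` lies in the tail component and `S(eᵢ)` in the head component, `Rⱼᵢ = -1`
in the opposite case, and `Rⱼᵢ = 0` if `eᵢ` and `S(eᵢ)` are on the same side of `eⱼ`. -/
noncomputable def RibbonGraph.ribbonMatrix (G : RibbonGraph V E) : Matrix E E ℚ :=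
  fun j i =>
    if j = i then
      (if (G.without i).Reachable (G.S i) (G.head i) then (1/2 : ℚ) else -(1/2))
    else if (G.without j).Reachable (G.tail i) (G.tail j) ∧
            (G.without j).Reachable (G.S i) (G.head j) then 1
    else if (G.without j).Reachable (G.tail i) (G.head j) ∧
            (G.without j).Reachable (G.S i) (G.tail j) then -1
    else 0

/-- The half Alexander polynomial `ρ(X) = det((X-1)·R - (1/2)(X+1)·I)` of a ribbon
graph with ribbon matrix `R`. -/
noncomputable def RibbonGraph.halfAlex (G : RibbonGraph V E) : Polynomial ℚ :=
  ((X - 1 : ℚ[X]) • G.ribbonMatrix.map C -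
    (C (1/2 : ℚ) * (X + 1)) • (1 : Matrix E E ℚ[X])).det

/-- The Conway-normalized Alexander polynomial `Δ(X) = ρ(X)·ρ(X⁻¹)` of a ribbon graph,
as an element of the field of rational functions `ℚ(X)`. -/
noncomputable def RibbonGraph.conwayAlex (G : RibbonGraph V E) : RatFunc ℚ :=
  algebraMap ℚ[X] (RatFunc ℚ) G.halfAlex *
    G.halfAlex.eval₂ (algebraMap ℚ (RatFunc ℚ)) (RatFunc.X)⁻¹


/-! Since `v` is a leaf, deleting it changes no reachability among the other vertices of
`T - eⱼ`, and `S` avoids `v`; hence the ribbon matrix of `(T', S')` is that of `(T, S)` with row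
and column `i` deleted. In `T - eᵢ` the vertex `v` is isolated, so for `k ≠ i` the edge `eₖ` and
`S(eₖ)` lie on the same side of `eᵢ` and row `i` vanishes off the diagonal. Expanding along that
row gives `ρ = mᵢᵢ · ρ'` with `mᵢᵢ = -1` or `-X` according as `Rᵢᵢ = ±1/2`, and a factor `-Xⁿ`
cancels in `ρ(X)·ρ(X⁻¹)`. -/

lemma SimpleGraph.Reachable.comap_subtype_of_subsingleton_neighborSet {W : Type*}
    {H : SimpleGraph W} {p : W → Prop} (hp : ∀ x, ¬p x → (H.neighborSet x).Subsingleton)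
    {a b : Subtype p} (h : H.Reachable a b) :
    (H.comap (Function.Embedding.subtype p)).Reachable a b := by
  classical
  obtain ⟨q, hq⟩ := h.some.toPath
  refine ⟨q.induce {x | p x} fun x hx => ?_⟩
  by_contra hx'
  exact hq.isTrail.not_mem_support_of_subsingleton_neighborSet (by grind) (by grind)
    (hp x hx') hx

lemma Matrix.det_eq_mul_det_submatrix_ne_of_row_eq_zero {ι R : Type*} [Fintype ι]
    [DecidableEq ι] [CommRing R] (M : Matrix ι ι R) (i : ι) (hrow : ∀ k, k ≠ i → M i k = 0) :
    M.det = M i i * (M.submatrix ((↑) : {k // k ≠ i} → ι) (↑)).det := by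
  have : Unique {k // ¬k ≠ i} := ⟨⟨⟨i, not_not.2 rfl⟩⟩, fun k => Subtype.ext (not_not.1 k.2)⟩
  rw [M.twoBlockTriangular_det (· ≠ i) fun r hr k hk => not_not.1 hr ▸ hrow k hk, mul_comm,
    Matrix.det_unique, Matrix.toSquareBlockProp_def, Matrix.of_apply,
    not_not.1 (default : {k // ¬k ≠ i}).2]
  rfl

lemma RatFunc.algebraMap_eq_C_mul_X_zpow_of_eq_neg_X_pow_mul {K : Type*} [Field K]
    {p q : K[X]} {n : ℕ} (h : p = -Polynomial.X ^ n * q) :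
    algebraMap K[X] (RatFunc K) q =
      RatFunc.C (-1) * RatFunc.X ^ (-n : ℤ) * algebraMap K[X] (RatFunc K) p := by
  have := RatFunc.X_ne_zero (K := K)
  subst h
  simp only [map_mul, map_neg, map_pow, RatFunc.algebraMap_X, map_one, _root_.zpow_neg,
    zpow_natCast]
  field_simp

-- Stated over `ℚ` so that `algebraMap ℚ (RatFunc ℚ)` is the one in `RibbonGraph.conwayAlex`.
lemma RatFunc.algebraMap_mul_eval₂_X_inv_eq_of_eq_neg_X_pow_mul {p q : ℚ[X]} {n : ℕ}
    (h : p = -Polynomial.X ^ n * q) :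
    algebraMap ℚ[X] (RatFunc ℚ) p * p.eval₂ (algebraMap ℚ (RatFunc ℚ)) RatFunc.X⁻¹ =
      algebraMap ℚ[X] (RatFunc ℚ) q * q.eval₂ (algebraMap ℚ (RatFunc ℚ)) RatFunc.X⁻¹ := by
  have := RatFunc.X_ne_zero (K := ℚ)
  rw [h, map_mul, map_neg, map_pow, algebraMap_X, eval₂_mul, eval₂_neg, eval₂_X_pow, inv_pow]
  field_simp

namespace RibbonGraph

section AlexMatrix

variable {ι : Type*} [DecidableEq ι]

noncomputable def alexMatrix (R : Matrix ι ι ℚ) : Matrix ι ι ℚ[X] :=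
  (X - 1 : ℚ[X]) • R.map C - (C (1/2 : ℚ) * (X + 1)) • (1 : Matrix ι ι ℚ[X])

lemma alexMatrix_submatrix {κ : Type*} [DecidableEq κ] (R : Matrix ι ι ℚ)
    {f : κ → ι} (hf : Function.Injective f) :
    alexMatrix (R.submatrix f f) = (alexMatrix R).submatrix f f := by
  ext a b
  simp [alexMatrix, Matrix.one_apply, hf.eq_iff]

lemma alexMatrix_apply_of_ne (R : Matrix ι ι ℚ) {a b : ι} (hab : a ≠ b) :
    alexMatrix R a b = (X - 1) * C (R a b) := by
  simp [alexMatrix, Matrix.one_apply_ne hab]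

lemma alexMatrix_apply_self_of_eq_half (R : Matrix ι ι ℚ) {a : ι} (h : R a a = 1/2) :
    alexMatrix R a a = -1 := by
  simp only [alexMatrix, Matrix.sub_apply, Matrix.smul_apply, Matrix.map_apply,
    Matrix.one_apply_eq, smul_eq_mul, h, mul_one]
  have : (C (1/2 : ℚ) : ℚ[X]) * 2 = 1 := by rw [← C_ofNat, ← C_mul]; norm_num
  linear_combination -this

lemma alexMatrix_apply_self_of_eq_neg_half (R : Matrix ι ι ℚ) {a : ι} (h : R a a = -(1/2)) :
    alexMatrix R a a = -X := by
  simp only [alexMatrix, Matrix.sub_apply, Matrix.smul_apply, Matrix.map_apply,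
    Matrix.one_apply_eq, smul_eq_mul, h, mul_one, map_neg]
  have : (C (1/2 : ℚ) : ℚ[X]) * 2 = 1 := by rw [← C_ofNat, ← C_mul]; norm_num
  linear_combination -X * this

end AlexMatrix

variable (G : RibbonGraph V E)

lemma halfAlex_eq_det_alexMatrix : G.halfAlex = (alexMatrix G.ribbonMatrix).det := rfl

lemma exists_alexMatrix_ribbonMatrix_apply_self (j : E) :
    ∃ n ≤ 1, alexMatrix G.ribbonMatrix j j = -X ^ n := by
  by_cases hj : (G.without j).Reachable (G.S j) (G.head j)
  · refine ⟨0, zero_le_one, ?_⟩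
    rw [pow_zero]
    exact alexMatrix_apply_self_of_eq_half _ (by simp [ribbonMatrix, hj])
  · refine ⟨1, le_rfl, ?_⟩
    rw [pow_one]
    exact alexMatrix_apply_self_of_eq_neg_half _ (by simp [ribbonMatrix, hj])

lemma without_adj_iff {j : E} {a b : V} :
    (G.without j).Adj a b ↔ ∃ e ≠ j, s(G.tail e, G.head e) = s(a, b) := by
  rw [without, SimpleGraph.fromRel_adj]
  constructor
  · rintro ⟨-, ⟨e, he, rfl, rfl⟩ | ⟨e, he, rfl, rfl⟩⟩
    exacts [⟨e, he, rfl⟩, ⟨e, he, Sym2.eq_swap⟩]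
  · rintro ⟨e, he, h⟩
    rcases Sym2.eq_iff.1 h with ⟨rfl, rfl⟩ | ⟨rfl, rfl⟩
    exacts [⟨G.no_loop e, Or.inl ⟨e, he, rfl, rfl⟩⟩,
      ⟨(G.no_loop e).symm, Or.inr ⟨e, he, rfl, rfl⟩⟩]

section Pendant

variable {G} {v : V} {i : E} (hpend : ∀ e : E, (G.tail e = v ∨ G.head e = v) ↔ e = i)
include hpend

lemma eq_of_mem_pendant {e : E} (h : v ∈ s(G.tail e, G.head e)) : e = i :=
  (hpend e).1 (by rw [Sym2.mem_iff] at h; tauto)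

lemma eq_of_reachable_without_pendant {x : V} (h : (G.without i).Reachable x v) : x = v := by
  by_contra hxv
  obtain ⟨y, hy⟩ := h.nonempty_neighborSet_right hxv
  obtain ⟨e, he, hev⟩ := G.without_adj_iff.1 hy
  exact he (eq_of_mem_pendant hpend (hev ▸ Sym2.mem_mk_left v y))

lemma subsingleton_neighborSet_without_pendant (j : E) :
    ((G.without j).neighborSet v).Subsingleton := by
  intro x hx y hy
  obtain ⟨e, -, hex⟩ := G.without_adj_iff.1 hx
  obtain ⟨e', -, hey⟩ := G.without_adj_iff.1 hy
  have hee' : e = e' := (eq_of_mem_pendant hpend (hex ▸ Sym2.mem_mk_left v x)).trans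
    (eq_of_mem_pendant hpend (hey ▸ Sym2.mem_mk_left v y)).symm
  exact Sym2.congr_right.1 (hex.symm.trans (hee' ▸ hey))

lemma ribbonMatrix_pendant_apply_of_ne (hv : ∀ e : E, G.S e ≠ v) {k : E} (hk : k ≠ i) :
    G.ribbonMatrix i k = 0 := by
  have hisolated : ∀ x, (G.without i).Reachable x v → x = v :=
    fun x => eq_of_reachable_without_pendant hpend
  simp only [ribbonMatrix, if_neg hk.symm]
  rcases (hpend i).2 rfl with hvi | hvi <;> rw [hvi] <;> grind

variable (G' : RibbonGraph {u : V // u ≠ v} {e : E // e ≠ i})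
  (htail : ∀ e : {e : E // e ≠ i}, (G'.tail e : V) = G.tail e)
  (hhead : ∀ e : {e : E // e ≠ i}, (G'.head e : V) = G.head e)
include htail hhead

lemma without_eq_comap (j : {e : E // e ≠ i}) :
    G'.without j = (G.without j).comap (Function.Embedding.subtype _) := by
  ext a b
  rw [SimpleGraph.comap_adj, without_adj_iff, without_adj_iff]
  constructor
  · rintro ⟨e, he, h⟩
    refine ⟨e, Subtype.coe_injective.ne he, ?_⟩
    rw [← htail, ← hhead]
    simpa using congrArg (Sym2.map Subtype.val) h
  · rintro ⟨e, he, h⟩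
    have hei : e ≠ i := fun hei => by
      have hve : v ∈ s(G.tail e, G.head e) :=
        Sym2.mem_iff.2 (((hpend e).2 hei).imp Eq.symm Eq.symm)
      rw [h, Sym2.mem_iff] at hve
      exact hve.elim (a.2 ·.symm) (b.2 ·.symm)
    refine ⟨⟨e, hei⟩, fun h' => he (congrArg Subtype.val h'),
      Sym2.map.injective Subtype.coe_injective ?_⟩
    simpa [htail, hhead] using h

lemma reachable_without_iff (j : {e : E // e ≠ i}) (a b : {u : V // u ≠ v}) :
    (G'.without j).Reachable a b ↔ (G.without j).Reachable a b := by
  rw [without_eq_comap hpend G' htail hhead]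
  refine ⟨fun h => h.map (SimpleGraph.Embedding.comap _ _).toHom, fun h => ?_⟩
  exact h.comap_subtype_of_subsingleton_neighborSet fun x hx =>
    not_not.1 hx ▸ subsingleton_neighborSet_without_pendant hpend j

lemma ribbonMatrix_eq_submatrix (hS : ∀ e : {e : E // e ≠ i}, (G'.S e : V) = G.S e) :
    G'.ribbonMatrix = G.ribbonMatrix.submatrix (↑) (↑) := by
  classical
  ext j k
  simp only [ribbonMatrix, Matrix.submatrix_apply, reachable_without_iff hpend G' htail hhead,
    htail, hhead, hS, Subtype.ext_iff]

lemma halfAlex_eq_neg_X_pow_mul (hv : ∀ e : E, G.S e ≠ v)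
    (hS : ∀ e : {e : E // e ≠ i}, (G'.S e : V) = G.S e) :
    ∃ n ≤ 1, G.halfAlex = -X ^ n * G'.halfAlex := by
  obtain ⟨n, hn, hdiag⟩ := G.exists_alexMatrix_ribbonMatrix_apply_self i
  refine ⟨n, hn, ?_⟩
  rw [halfAlex_eq_det_alexMatrix, halfAlex_eq_det_alexMatrix,
    ribbonMatrix_eq_submatrix hpend G' htail hhead hS,
    alexMatrix_submatrix _ Subtype.coe_injective, ← hdiag]
  refine Matrix.det_eq_mul_det_submatrix_ne_of_row_eq_zero _ i fun k hk => ?_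
  rw [alexMatrix_apply_of_ne _ hk.symm, ribbonMatrix_pendant_apply_of_ne hpend hv hk,
    map_zero, mul_zero]

end Pendant

end RibbonGraph

/-- R0-reduction: if `v` is a pendant vertex of `T` not in the image of
`S`, with unique incident edge `i`, and `(T', S')` is obtained by deleting `v` and `i`
and restricting `S`, then the half Alexander polynomial changes only by `ε·X^k` with
`ε ∈ {1, -1}` and `k ∈ {-1, 0, 1}`; consequently the Conway-normalized Alexander
polynomials agree. -/
theorem RibbonGraph.r0_reduction (G : RibbonGraph V E) (v : V) (i : E)
    (hpend : ∀ e : E, (G.tail e = v ∨ G.head e = v) ↔ e = i)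
    (hv : ∀ e : E, G.S e ≠ v)
    (G' : RibbonGraph {u : V // u ≠ v} {e : E // e ≠ i})
    (htail : ∀ e : {e : E // e ≠ i}, (G'.tail e : V) = G.tail e)
    (hhead : ∀ e : {e : E // e ≠ i}, (G'.head e : V) = G.head e)
    (hS : ∀ e : {e : E // e ≠ i}, (G'.S e : V) = G.S e) :
    (∃ (ε : ℚ) (k : ℤ), (ε = 1 ∨ ε = -1) ∧ (k = -1 ∨ k = 0 ∨ k = 1) ∧
      algebraMap ℚ[X] (RatFunc ℚ) G'.halfAlex =
        RatFunc.C ε * RatFunc.X ^ k * algebraMap ℚ[X] (RatFunc ℚ) G.halfAlex) ∧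
    G'.conwayAlex = G.conwayAlex := by
  obtain ⟨n, hn, h⟩ := halfAlex_eq_neg_X_pow_mul hpend G' htail hhead hv hS
  refine ⟨⟨-1, -n, Or.inr rfl, by omega,
    RatFunc.algebraMap_eq_C_mul_X_zpow_of_eq_neg_X_pow_mul h⟩, ?_⟩
  rw [conwayAlex, conwayAlex]
  exact (RatFunc.algebraMap_mul_eval₂_X_inv_eq_of_eq_neg_X_pow_mul h).symm
end

section
/- Let (T, S) be a ribbon graph of size g with ribbon matrix R and half Alexander polynomial ρ(X). Suppose S(e_i) is an endpoint (the head or the tail) of the edge e_i. Let (T', S') be the ribbon graph of size g−1 obtained by the R1-reduction: contract e_i (delete e_i and identify its two endpoints into a single new vertex), and define S' on each remaining edge e_j by S'(e_j) = S(e_j) if S(e_j) is not an endpoint of e_i, and S'(e_j) = the new merged vertex if S(e_j) is an endpoint of e_i. Then the half Alexander polynomial ρ'(X) of (T', S') satisfies ρ'(X) = ε·X^k·ρ(X) in ℚ(X) for some ε ∈ {1, −1} and some k ∈ {−1, 0, 1}; consequently the Conway-normalized Alexander polynomials agree: ρ'(X)·ρ'(X⁻¹) = ρ(X)·ρ(X⁻¹).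 -/
open Matrix Polynomial

variable {V E : Type} [Fintype V] [DecidableEq V] [Fintype E] [DecidableEq E]

section Aux
open SimpleGraph

lemma reach_map {W W' : Type} {G : SimpleGraph W} {H : SimpleGraph W'} (f : W → W')
    (h : ∀ a b, G.Adj a b → H.Reachable (f a) (f b)) {a b : W} (hr : G.Reachable a b) :
    H.Reachable (f a) (f b) := by
  obtain ⟨w⟩ := hr
  induction w with
  | nil => exact Reachable.refl _
  | cons hadj p ih => exact (h _ _ hadj).trans ih

lemma card_le_of_connected {W : Type} [Fintype W] :
    ∀ (n : ℕ) (G : SimpleGraph W) [Fintype G.edgeSet],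
      G.edgeFinset.card = n → G.Connected → Fintype.card W ≤ n + 1 := by
  intro n
  induction n using Nat.strong_induction_on with
  | _ n ih =>
    intro G _ hcard hconn
    classical
    by_cases hac : G.IsAcyclic
    · have := SimpleGraph.IsTree.card_edgeFinset ⟨hconn, hac⟩
      omega
    · simp only [SimpleGraph.IsAcyclic] at hac
      push_neg at hac
      obtain ⟨u, c, hc⟩ := hac
      have hne : c.edges ≠ [] := by
        intro h
        have := hc.three_le_length
        have := c.length_edges
        simp [h] at this
        omega
      obtain ⟨e, he⟩ := List.exists_mem_of_ne_nil _ hne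
      have heG : e ∈ G.edgeSet := c.edges_subset_edgeSet he
      induction e using Sym2.ind with
      | _ v w =>
      have hadj : G.Adj v w := heG
      have hreach : (G \ fromEdgeSet {s(v, w)}).Reachable v w :=
        (adj_and_reachable_delete_edges_iff_exists_cycle.mpr ⟨u, c, hc, he⟩).2
      set G' := G \ fromEdgeSet {s(v, w)} with hG'
      have hle : G' ≤ G := sdiff_le
      have hconn' : G'.Connected := by
        have hne' := hconn.nonempty
        refine SimpleGraph.Connected.mk (fun a b => ?_)
        refine reach_map (G := G) id ?_ (hconn a b)
        intro a b hab
        by_cases hsab : s(a, b) = s(v, w)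
        · rw [Sym2.eq_iff] at hsab
          rcases hsab with ⟨rfl, rfl⟩ | ⟨rfl, rfl⟩
          · exact hreach
          · exact hreach.symm
        · exact SimpleGraph.Adj.reachable (by simp [hG', hab, hsab])
      have hedge : G'.edgeSet = G.edgeSet \ {s(v, w)} := by
        simp [hG', edgeSet_sdiff, edgeSet_fromEdgeSet]
      have hcard' : G'.edgeFinset.card = n - 1 := by
        have : G'.edgeFinset = G.edgeFinset.erase s(v, w) := by
          ext x
          simp [Set.mem_toFinset, hedge, mem_edgeFinset, and_comm]
        rw [this, Finset.card_erase_of_mem (by simpa [mem_edgeFinset] using hadj), hcard]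
      have hn : 1 ≤ n := by
        rw [← hcard]
        exact Finset.card_pos.mpr ⟨s(v, w), by simpa [mem_edgeFinset] using hadj⟩
      have := ih (n - 1) (by omega) G' hcard' hconn'
      omega

lemma RibbonGraph.not_reachable_without (G : RibbonGraph V E) (j : E) :
    ¬ (G.without j).Reachable (G.tail j) (G.head j) := by
  classical
  intro hreach
  set F : SimpleGraph V := SimpleGraph.fromRel fun a b => ∃ e, G.tail e = a ∧ G.head e = b with hF
  set F' : SimpleGraph V := F \ SimpleGraph.fromEdgeSet {s(G.tail j, G.head j)} with hF'
  have hwle : G.without j ≤ F' := by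
    intro a b hab
    rw [RibbonGraph.without, SimpleGraph.fromRel_adj] at hab
    obtain ⟨hne, hor⟩ := hab
    have key : ∃ e, e ≠ j ∧ s(G.tail e, G.head e) = s(a, b) := by
      rcases hor with ⟨e, hej, h1, h2⟩ | ⟨e, hej, h1, h2⟩
      · exact ⟨e, hej, by rw [h1, h2]⟩
      · exact ⟨e, hej, by rw [h1, h2, Sym2.eq_swap]⟩
    obtain ⟨e, hej, hee⟩ := key
    constructor
    · rw [hF, SimpleGraph.fromRel_adj]
      refine ⟨hne, ?_⟩
      rw [Sym2.eq_iff] at hee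
      rcases hee with ⟨h1, h2⟩ | ⟨h1, h2⟩
      · exact Or.inl ⟨e, h1, h2⟩
      · exact Or.inr ⟨e, h1, h2⟩
    · simp only [SimpleGraph.fromEdgeSet_adj, Set.mem_singleton_iff]
      rintro ⟨hmem, -⟩
      exact hej (G.edge_inj (hee.trans hmem))
  have hreach' : F'.Reachable (G.tail j) (G.head j) := hreach.mono hwle
  have hconn' : F'.Connected := by
    have hne' := G.connected.nonempty
    refine SimpleGraph.Connected.mk (fun a b => ?_)
    refine reach_map (G := F) id ?_ (G.connected a b)
    intro a b hab
    simp only [id_eq]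
    rw [hF, SimpleGraph.fromRel_adj] at hab
    obtain ⟨hne, hor⟩ := hab
    have key : ∃ e, s(G.tail e, G.head e) = s(a, b) := by
      rcases hor with ⟨e, h1, h2⟩ | ⟨e, h1, h2⟩
      · exact ⟨e, by rw [h1, h2]⟩
      · exact ⟨e, by rw [h1, h2, Sym2.eq_swap]⟩
    obtain ⟨e, hee⟩ := key
    by_cases hej : e = j
    · subst hej
      rw [Sym2.eq_iff] at hee
      rcases hee with ⟨h1, h2⟩ | ⟨h1, h2⟩
      · rw [← h1, ← h2]; exact hreach'
      · rw [← h1, ← h2]; exact hreach'.symm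
    · refine SimpleGraph.Adj.reachable ?_
      constructor
      · rw [hF, SimpleGraph.fromRel_adj]
        rw [Sym2.eq_iff] at hee
        refine ⟨hne, ?_⟩
        rcases hee with ⟨h1, h2⟩ | ⟨h1, h2⟩
        · exact Or.inl ⟨e, h1, h2⟩
        · exact Or.inr ⟨e, h1, h2⟩
      · simp only [SimpleGraph.fromEdgeSet_adj, Set.mem_singleton_iff]
        rintro ⟨hmem, -⟩
        exact hej (G.edge_inj (hee.trans hmem))
  have hsub : F'.edgeFinset ⊆
      Finset.image (fun e => s(G.tail e, G.head e)) (Finset.univ.erase j) := by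
    intro x hx
    rw [SimpleGraph.mem_edgeFinset, hF', SimpleGraph.edgeSet_sdiff, Set.mem_diff] at hx
    obtain ⟨hxF, hxne⟩ := hx
    have hxnej : x ≠ s(G.tail j, G.head j) := by
      intro h
      apply hxne
      rw [SimpleGraph.edgeSet_fromEdgeSet, Set.mem_diff]
      exact ⟨by simp [h], fun hd => F.not_isDiag_of_mem_edgeSet hxF (h ▸ hd)⟩
    have key : ∃ e, s(G.tail e, G.head e) = x := by
      induction x using Sym2.ind with
      | _ a b =>
        rw [SimpleGraph.mem_edgeSet, hF, SimpleGraph.fromRel_adj] at hxF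
        obtain ⟨hne, hor⟩ := hxF
        rcases hor with ⟨e, h1, h2⟩ | ⟨e, h1, h2⟩
        · exact ⟨e, by rw [h1, h2]⟩
        · exact ⟨e, by rw [h1, h2, Sym2.eq_swap]⟩
    obtain ⟨e, hee⟩ := key
    have hej : e ≠ j := by rintro rfl; exact hxnej hee.symm
    exact Finset.mem_image.mpr ⟨e, Finset.mem_erase.mpr ⟨hej, Finset.mem_univ e⟩, hee⟩
  have hle1 : F'.edgeFinset.card ≤ Fintype.card E - 1 := by
    calc F'.edgeFinset.card ≤ (Finset.image (fun e => s(G.tail e, G.head e))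
          (Finset.univ.erase j)).card := Finset.card_le_card hsub
      _ ≤ (Finset.univ.erase j).card := Finset.card_image_le
      _ = Fintype.card E - 1 := by rw [Finset.card_erase_of_mem (Finset.mem_univ j),
            Finset.card_univ]
  have hE1 : 1 ≤ Fintype.card E := Fintype.card_pos_iff.mpr ⟨j⟩
  have := card_le_of_connected F'.edgeFinset.card F' rfl hconn'
  have := G.card_eq
  omega

/-- The contraction map sending `head i` to `tail i`. -/
def RibbonGraph.contrMap (G : RibbonGraph V E) (i : E) (v : V) : {u : V // u ≠ G.head i} :=
  if h : v = G.head i then ⟨G.tail i, G.no_loop i⟩ else ⟨v, h⟩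

lemma RibbonGraph.contrMap_coe (G : RibbonGraph V E) (i : E) (v : V) :
    ((G.contrMap i v) : V) = if v = G.head i then G.tail i else v := by
  unfold RibbonGraph.contrMap
  split <;> simp [*]

lemma RibbonGraph.reach_val_contrMap (G : RibbonGraph V E) {i j : E} (hj : j ≠ i) (v : V) :
    (G.without j).Reachable v ((G.contrMap i v : V)) := by
  rw [RibbonGraph.contrMap_coe]
  by_cases h : v = G.head i
  · rw [if_pos h, h]
    refine SimpleGraph.Adj.reachable ?_
    rw [RibbonGraph.without, SimpleGraph.fromRel_adj]
    exact ⟨(G.no_loop i).symm, Or.inr ⟨i, fun hh => hj hh.symm, rfl, rfl⟩⟩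
  · rw [if_neg h]

lemma RibbonGraph.reach_contr (G : RibbonGraph V E) (i : E)
    (G' : RibbonGraph {u : V // u ≠ G.head i} {e : E // e ≠ i})
    (htail : ∀ e : {e : E // e ≠ i},
      (G'.tail e : V) = if G.tail e.val = G.head i then G.tail i else G.tail e.val)
    (hhead : ∀ e : {e : E // e ≠ i},
      (G'.head e : V) = if G.head e.val = G.head i then G.tail i else G.head e.val)
    {j : E} (hj : j ≠ i) (a b : V) :
    (G.without j).Reachable a b ↔
      (G'.without ⟨j, hj⟩).Reachable (G.contrMap i a) (G.contrMap i b) := by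
  have htail' : ∀ e : {e : E // e ≠ i}, G'.tail e = G.contrMap i (G.tail e.val) := by
    intro e
    refine Subtype.ext ?_
    rw [htail, RibbonGraph.contrMap_coe]
  have hhead' : ∀ e : {e : E // e ≠ i}, G'.head e = G.contrMap i (G.head e.val) := by
    intro e
    refine Subtype.ext ?_
    rw [hhead, RibbonGraph.contrMap_coe]
  constructor
  · refine reach_map (G.contrMap i) ?_
    intro a b hab
    rw [RibbonGraph.without, SimpleGraph.fromRel_adj] at hab
    obtain ⟨hne, hor⟩ := hab
    -- reduce to the oriented case
    have key : ∀ a b : V, (∃ e, e ≠ j ∧ G.tail e = a ∧ G.head e = b) →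
        (G'.without ⟨j, hj⟩).Reachable (G.contrMap i a) (G.contrMap i b) := by
      rintro a b ⟨e, hej, rfl, rfl⟩
      by_cases hei : e = i
      · have h1 : G.contrMap i (G.tail e) = G.contrMap i (G.head e) := by
          refine Subtype.ext ?_
          rw [RibbonGraph.contrMap_coe, RibbonGraph.contrMap_coe, hei,
            if_neg (G.no_loop i), if_pos rfl]
        rw [h1]
      · by_cases hfe : G.contrMap i (G.tail e) = G.contrMap i (G.head e)
        · rw [hfe]
        · refine SimpleGraph.Adj.reachable ?_
          rw [RibbonGraph.without, SimpleGraph.fromRel_adj]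
          refine ⟨hfe, Or.inl ⟨⟨e, hei⟩, ?_, (htail' _).trans rfl, (hhead' _).trans rfl⟩⟩
          intro hh
          exact hej (Subtype.ext_iff.mp hh)
    rcases hor with h | h
    · exact key a b h
    · exact (key b a h).symm
  · intro hr
    have step : ∀ u v : {u : V // u ≠ G.head i}, (G'.without ⟨j, hj⟩).Adj u v →
        (G.without j).Reachable (u : V) (v : V) := by
      intro u v huv
      rw [RibbonGraph.without, SimpleGraph.fromRel_adj] at huv
      obtain ⟨hne, hor⟩ := huv
      have key : ∀ u v : {u : V // u ≠ G.head i},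
          (∃ e, e ≠ (⟨j, hj⟩ : {e : E // e ≠ i}) ∧ G'.tail e = u ∧ G'.head e = v) →
          (G.without j).Reachable (u : V) (v : V) := by
        rintro u v ⟨e, hej, rfl, rfl⟩
        have hej' : (e : E) ≠ j := fun h => hej (Subtype.ext h)
        have r1 : (G.without j).Reachable (G'.tail e : V) (G.tail e.val) := by
          rw [htail' e]
          exact (G.reach_val_contrMap hj (G.tail e.val)).symm
        have r2 : (G.without j).Adj (G.tail e.val) (G.head e.val) := by
          rw [RibbonGraph.without, SimpleGraph.fromRel_adj]
          exact ⟨G.no_loop e.val, Or.inl ⟨e.val, hej', rfl, rfl⟩⟩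
        have r3 : (G.without j).Reachable (G.head e.val) (G'.head e : V) := by
          rw [hhead' e]
          exact G.reach_val_contrMap hj (G.head e.val)
        exact (r1.trans r2.reachable).trans r3
      rcases hor with h | h
      · exact key u v h
      · exact (key v u h).symm
    have lifted : (G.without j).Reachable ((G.contrMap i a : V)) ((G.contrMap i b : V)) :=
      reach_map (fun u : {u : V // u ≠ G.head i} => (u : V)) step hr
    exact ((G.reach_val_contrMap hj a).trans lifted).trans (G.reach_val_contrMap hj b).symm

lemma RibbonGraph.ribbonMatrix_col_eq_zero (G : RibbonGraph V E) {i j : E}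
    (hSi : G.S i = G.tail i ∨ G.S i = G.head i) (hji : j ≠ i) :
    G.ribbonMatrix j i = 0 := by
  classical
  have hreach : (G.without j).Reachable (G.tail i) (G.S i) := by
    rcases hSi with h | h
    · rw [h]
    · rw [h]
      refine SimpleGraph.Adj.reachable ?_
      rw [RibbonGraph.without, SimpleGraph.fromRel_adj]
      exact ⟨G.no_loop i, Or.inl ⟨i, fun hh => hji hh.symm, rfl, rfl⟩⟩
  have hnot := G.not_reachable_without j
  have h1 : ¬((G.without j).Reachable (G.tail i) (G.tail j) ∧
      (G.without j).Reachable (G.S i) (G.head j)) := by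
    rintro ⟨hA, hB⟩
    exact hnot (hA.symm.trans (hreach.trans hB))
  have h2 : ¬((G.without j).Reachable (G.tail i) (G.head j) ∧
      (G.without j).Reachable (G.S i) (G.tail j)) := by
    rintro ⟨hA, hB⟩
    exact hnot (hB.symm.trans (hreach.symm.trans hA))
  simp only [RibbonGraph.ribbonMatrix]
  rw [if_neg hji, if_neg h1, if_neg h2]

lemma RibbonGraph.ribbonMatrix_diag_head (G : RibbonGraph V E) {i : E}
    (h : G.S i = G.head i) : G.ribbonMatrix i i = 1/2 := by
  classical
  simp only [RibbonGraph.ribbonMatrix, eq_self_iff_true, if_true]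
  rw [if_pos (by rw [h])]

lemma RibbonGraph.ribbonMatrix_diag_tail (G : RibbonGraph V E) {i : E}
    (h : G.S i = G.tail i) : G.ribbonMatrix i i = -(1/2) := by
  classical
  simp only [RibbonGraph.ribbonMatrix, eq_self_iff_true, if_true]
  rw [if_neg (by rw [h]; exact G.not_reachable_without i)]

lemma RibbonGraph.ribbonMatrix_contr (G : RibbonGraph V E) (i : E)
    (G' : RibbonGraph {u : V // u ≠ G.head i} {e : E // e ≠ i})
    (htail : ∀ e : {e : E // e ≠ i},
      (G'.tail e : V) = if G.tail e.val = G.head i then G.tail i else G.tail e.val)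
    (hhead : ∀ e : {e : E // e ≠ i},
      (G'.head e : V) = if G.head e.val = G.head i then G.tail i else G.head e.val)
    (hS : ∀ e : {e : E // e ≠ i},
      (G'.S e : V) = if G.S e.val = G.head i then G.tail i else G.S e.val)
    {j k : E} (hj : j ≠ i) (hk : k ≠ i) :
    G'.ribbonMatrix ⟨j, hj⟩ ⟨k, hk⟩ = G.ribbonMatrix j k := by
  classical
  have htail' : ∀ e : {e : E // e ≠ i}, G'.tail e = G.contrMap i (G.tail e.val) := by
    intro e
    refine Subtype.ext ?_
    rw [htail, RibbonGraph.contrMap_coe]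
  have hhead' : ∀ e : {e : E // e ≠ i}, G'.head e = G.contrMap i (G.head e.val) := by
    intro e
    refine Subtype.ext ?_
    rw [hhead, RibbonGraph.contrMap_coe]
  have hS' : ∀ e : {e : E // e ≠ i}, G'.S e = G.contrMap i (G.S e.val) := by
    intro e
    refine Subtype.ext ?_
    rw [hS, RibbonGraph.contrMap_coe]
  have key : ∀ (j : E) (hj : j ≠ i) (a b : V),
      (G'.without ⟨j, hj⟩).Reachable (G.contrMap i a) (G.contrMap i b) ↔
        (G.without j).Reachable a b :=
    fun j hj a b => (G.reach_contr i G' htail hhead hj a b).symm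
  by_cases hjk : j = k
  · subst hjk
    simp only [RibbonGraph.ribbonMatrix, eq_self_iff_true, Subtype.mk.injEq, if_true]
    have hiff : (G'.without ⟨j, hj⟩).Reachable (G'.S ⟨j, hj⟩) (G'.head ⟨j, hj⟩) ↔
        (G.without j).Reachable (G.S j) (G.head j) := by
      rw [hS' ⟨j, hj⟩, hhead' ⟨j, hj⟩]
      exact key j hj _ _
    by_cases h : (G.without j).Reachable (G.S j) (G.head j)
    · rw [if_pos h, if_pos (hiff.mpr h)]
    · rw [if_neg h, if_neg (fun hh => h (hiff.mp hh))]
  · have hjk' : (⟨j, hj⟩ : {e : E // e ≠ i}) ≠ ⟨k, hk⟩ :=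
      fun h => hjk (congrArg Subtype.val h)
    simp only [RibbonGraph.ribbonMatrix, if_neg hjk, if_neg hjk']
    have h1 : ((G'.without ⟨j, hj⟩).Reachable (G'.tail ⟨k, hk⟩) (G'.tail ⟨j, hj⟩) ∧
        (G'.without ⟨j, hj⟩).Reachable (G'.S ⟨k, hk⟩) (G'.head ⟨j, hj⟩)) ↔
        ((G.without j).Reachable (G.tail k) (G.tail j) ∧
          (G.without j).Reachable (G.S k) (G.head j)) := by
      rw [htail' ⟨k, hk⟩, htail' ⟨j, hj⟩, hS' ⟨k, hk⟩, hhead' ⟨j, hj⟩]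
      exact and_congr (key j hj _ _) (key j hj _ _)
    have h2 : ((G'.without ⟨j, hj⟩).Reachable (G'.tail ⟨k, hk⟩) (G'.head ⟨j, hj⟩) ∧
        (G'.without ⟨j, hj⟩).Reachable (G'.S ⟨k, hk⟩) (G'.tail ⟨j, hj⟩)) ↔
        ((G.without j).Reachable (G.tail k) (G.head j) ∧
          (G.without j).Reachable (G.S k) (G.tail j)) := by
      rw [htail' ⟨k, hk⟩, htail' ⟨j, hj⟩, hS' ⟨k, hk⟩, hhead' ⟨j, hj⟩]
      exact and_congr (key j hj _ _) (key j hj _ _)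
    by_cases c1 : (G.without j).Reachable (G.tail k) (G.tail j) ∧
        (G.without j).Reachable (G.S k) (G.head j)
    · rw [if_pos (h1.mpr c1), if_pos c1]
    · rw [if_neg (fun hh => c1 (h1.mp hh)), if_neg c1]
      by_cases c2 : (G.without j).Reachable (G.tail k) (G.head j) ∧
          (G.without j).Reachable (G.S k) (G.tail j)
      · rw [if_pos (h2.mpr c2), if_pos c2]
      · rw [if_neg (fun hh => c2 (h2.mp hh)), if_neg c2]

lemma RibbonGraph.halfAlex_contr (G : RibbonGraph V E) (i : E)
    (hSi : G.S i = G.tail i ∨ G.S i = G.head i)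
    (G' : RibbonGraph {u : V // u ≠ G.head i} {e : E // e ≠ i})
    (htail : ∀ e : {e : E // e ≠ i},
      (G'.tail e : V) = if G.tail e.val = G.head i then G.tail i else G.tail e.val)
    (hhead : ∀ e : {e : E // e ≠ i},
      (G'.head e : V) = if G.head e.val = G.head i then G.tail i else G.head e.val)
    (hS : ∀ e : {e : E // e ≠ i},
      (G'.S e : V) = if G.S e.val = G.head i then G.tail i else G.S e.val) :
    G.halfAlex = (if G.S i = G.head i then (-1 : ℚ[X]) else -X) * G'.halfAlex := by
  classical
  set M : Matrix E E ℚ[X] := (X - 1 : ℚ[X]) • G.ribbonMatrix.map C -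
    (C (1/2 : ℚ) * (X + 1)) • (1 : Matrix E E ℚ[X]) with hM
  set M' : Matrix {e : E // e ≠ i} {e : E // e ≠ i} ℚ[X] :=
    (X - 1 : ℚ[X]) • G'.ribbonMatrix.map C -
      (C (1/2 : ℚ) * (X + 1)) • (1 : Matrix {e : E // e ≠ i} {e : E // e ≠ i} ℚ[X]) with hM'
  have hMapply : ∀ j k : E, M j k = (X - 1) * C (G.ribbonMatrix j k) -
      (C (1/2 : ℚ) * (X + 1)) * (if j = k then 1 else 0) := by
    intro j k
    simp [hM, Matrix.sub_apply, Matrix.smul_apply, Matrix.map_apply, Matrix.one_apply,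
      smul_eq_mul, mul_ite, mul_one, mul_zero]
  have hM'apply : ∀ j k : {e : E // e ≠ i}, M' j k = (X - 1) * C (G'.ribbonMatrix j k) -
      (C (1/2 : ℚ) * (X + 1)) * (if j = k then 1 else 0) := by
    intro j k
    simp [hM', Matrix.sub_apply, Matrix.smul_apply, Matrix.map_apply, Matrix.one_apply,
      smul_eq_mul, mul_ite, mul_one, mul_zero]
  have h2 : (C (1/2 : ℚ) : ℚ[X]) * 2 = 1 := by
    rw [show (2 : ℚ[X]) = C 2 from (map_ofNat C 2).symm, ← C_mul]
    norm_num
  have hMii : M i i = if G.S i = G.head i then (-1 : ℚ[X]) else -X := by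
    rcases hSi with h | h
    · have hne : ¬ G.S i = G.head i := by
        rw [h]
        exact G.no_loop i
      rw [if_neg hne, hMapply, G.ribbonMatrix_diag_tail h, if_pos rfl]
      rw [map_neg]
      linear_combination (-(X : ℚ[X])) * h2
    · rw [if_pos h, hMapply, G.ribbonMatrix_diag_head h, if_pos rfl]
      linear_combination (-(1 : ℚ[X])) * h2
  let σ : Unit ⊕ {e : E // e ≠ i} ≃ E :=
    { toFun := Sum.elim (fun _ => i) Subtype.val
      invFun := fun e => if h : e = i then Sum.inl () else Sum.inr ⟨e, h⟩
      left_inv := by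
        rintro (⟨⟩ | ⟨e, he⟩)
        · simp
        · simp [he]
      right_inv := by
        intro e
        by_cases h : e = i <;> simp [h] }
  have hσ : ⇑σ = Sum.elim (fun _ : Unit => i) Subtype.val := rfl
  have hdecomp : M.submatrix σ σ =
      Matrix.fromBlocks (Matrix.of fun _ _ => M i i) (Matrix.of fun _ k => M i k.val) 0 M' := by
    ext a b
    cases a with
    | inl u =>
      cases b with
      | inl v => simp [hσ, Matrix.submatrix_apply]
      | inr k => simp [hσ, Matrix.submatrix_apply]
    | inr jj =>
      cases b with
      | inl v =>
        simp only [hσ, Matrix.submatrix_apply, Sum.elim_inl, Sum.elim_inr,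
          Matrix.fromBlocks_apply₂₁, Matrix.zero_apply]
        rw [hMapply, G.ribbonMatrix_col_eq_zero hSi jj.2, if_neg jj.2]
        simp
      | inr k =>
        simp only [hσ, Matrix.submatrix_apply, Sum.elim_inr, Matrix.fromBlocks_apply₂₂]
        rw [hMapply, hM'apply]
        have hR : G'.ribbonMatrix jj k = G.ribbonMatrix jj.val k.val :=
          G.ribbonMatrix_contr i G' htail hhead hS jj.2 k.2
        rw [hR]
        congr 1
        by_cases h : jj = k
        · rw [if_pos h, if_pos (congrArg Subtype.val h)]
        · rw [if_neg h, if_neg (fun hh => h (Subtype.ext hh))]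
  have hdet : G.halfAlex = M.det := rfl
  have hdet' : G'.halfAlex = M'.det := rfl
  calc G.halfAlex = M.det := hdet
    _ = (M.submatrix σ σ).det := (Matrix.det_submatrix_equiv_self σ M).symm
    _ = (Matrix.fromBlocks (Matrix.of fun _ _ => M i i)
          (Matrix.of fun _ k => M i k.val) 0 M').det := by rw [hdecomp]
    _ = (Matrix.of fun _ _ : Unit => M i i).det * M'.det :=
          Matrix.det_fromBlocks_zero₂₁ _ _ _
    _ = M i i * M'.det := by rw [Matrix.det_unique]; rfl
    _ = (if G.S i = G.head i then (-1 : ℚ[X]) else -X) * G'.halfAlex := by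
          rw [hMii, hdet']

end Aux
/-- R1-reduction: if `S(eᵢ)` is an endpoint of the edge `eᵢ`, and
`(T', S')` is obtained by contracting `eᵢ` (deleting `eᵢ` and identifying its head with
its tail, the merged vertex being represented by `G.tail i`), with `S'` sending an edge
to the merged vertex if its `S`-image was an endpoint of `eᵢ` and to its old `S`-image
otherwise, then the half Alexander polynomial changes only by `ε·X^k` with `ε ∈ {1, -1}`
and `k ∈ {-1, 0, 1}`; consequently the Conway-normalized Alexander polynomials agree. -/
theorem RibbonGraph.r1_reduction (G : RibbonGraph V E) (i : E)
    (hSi : G.S i = G.tail i ∨ G.S i = G.head i)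
    (G' : RibbonGraph {u : V // u ≠ G.head i} {e : E // e ≠ i})
    (htail : ∀ e : {e : E // e ≠ i},
      (G'.tail e : V) = if G.tail e.val = G.head i then G.tail i else G.tail e.val)
    (hhead : ∀ e : {e : E // e ≠ i},
      (G'.head e : V) = if G.head e.val = G.head i then G.tail i else G.head e.val)
    (hS : ∀ e : {e : E // e ≠ i},
      (G'.S e : V) = if G.S e.val = G.head i then G.tail i else G.S e.val) :
    (∃ (ε : ℚ) (k : ℤ), (ε = 1 ∨ ε = -1) ∧ (k = -1 ∨ k = 0 ∨ k = 1) ∧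
      algebraMap ℚ[X] (RatFunc ℚ) G'.halfAlex =
        RatFunc.C ε * RatFunc.X ^ k * algebraMap ℚ[X] (RatFunc ℚ) G.halfAlex) ∧
    G'.conwayAlex = G.conwayAlex := by
  classical
  have hkey := G.halfAlex_contr i hSi G' htail hhead hS
  have hXne : (RatFunc.X : RatFunc ℚ) ≠ 0 := RatFunc.X_ne_zero
  have hcong : ∀ c : ℚ[X], G.halfAlex = c * G'.halfAlex →
      G.conwayAlex = (algebraMap ℚ[X] (RatFunc ℚ) c *
        c.eval₂ (algebraMap ℚ (RatFunc ℚ)) (RatFunc.X)⁻¹) * G'.conwayAlex := by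
    intro c hc
    rw [RibbonGraph.conwayAlex, RibbonGraph.conwayAlex, hc, _root_.map_mul, Polynomial.eval₂_mul]
    ring
  by_cases h : G.S i = G.head i
  · rw [if_pos h] at hkey
    constructor
    · refine ⟨-1, 0, Or.inr rfl, Or.inr (Or.inl rfl), ?_⟩
      rw [hkey, _root_.map_mul, _root_.map_neg, _root_.map_one, zpow_zero, _root_.map_neg, _root_.map_one]
      ring
    · rw [hcong (-1) hkey, _root_.map_neg, _root_.map_one, Polynomial.eval₂_neg, Polynomial.eval₂_one]
      ring
  · rw [if_neg h] at hkey
    have halg : algebraMap ℚ[X] (RatFunc ℚ) (-X : ℚ[X]) = -RatFunc.X := by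
      rw [_root_.map_neg, RatFunc.algebraMap_X]
    constructor
    · refine ⟨-1, -1, Or.inr rfl, Or.inl rfl, ?_⟩
      rw [hkey, _root_.map_mul, halg, _root_.zpow_neg_one, _root_.map_neg, _root_.map_one]
      field_simp
    · rw [hcong (-X) hkey, halg, Polynomial.eval₂_neg, Polynomial.eval₂_X]
      field_simp
end
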